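/- arXiv:2307.13257 — 3 statements merged into one kernel-verified Lean document; each statement's English description precedes it below -/
import Mathlib

section
/- Any multiset of lines in ℝ² covering every point of T_2(n) at least four times has cardinality at least 3n, for all n ≥ 2. -/
open scoped Classical

/-- The triangular grid `T_d(n)`. -/
def TriGrid (d n : ℕ) : Set (Fin d → ℤ) :=
  {x | (∀ i, 0 ≤ x i) ∧ (∑ i, x i) ≤ (n : ℤ) - 1}

/-- Cast an integer point to a real point. -/
def toReal {d : ℕ} (x : Fin d → ℤ) : Fin d → ℝ := fun i => (x i : ℝ)

/-- Number of hyperplanes (with multiplicity) of the multiset `C` passing through `p`.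
A hyperplane is encoded as a pair `(a, b)` with `a ≠ 0`, representing `{p | ∑ i, a i * p i = b}`. -/
noncomputable def hypCount (d : ℕ) (C : Multiset ((Fin d → ℝ) × ℝ)) (p : Fin d → ℝ) : ℕ :=
  Multiset.countP (fun H => ∑ i, H.1 i * p i = H.2) C

/-!
Induction on `n`. If a side of `T_2(n)` occurs at least three times in the cover, dropping those
copies leaves a `4`-cover of a translate of `T_2(n - 1)`, with at least three lines fewer.
Otherwise count incidences with the `3n - 3` boundary points: each of them lies on four lines, a
side contains `n` of them and every other line at most two (of three collinear boundary points,
the middle one lies on a side, and then so does one of the outer ones). With at most six side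
lines this gives `4(3n - 3) ≤ 2|C| + 6(n - 2)`.
-/

open Finset

theorem Multiset.sum_countP_eq_sum_map_card_filter {α β : Type*} (B : Finset β) (R : α → β → Prop)
    (C : Multiset α) : ∑ b ∈ B, C.countP (R · b) = (C.map fun a => (B.filter (R a)).card).sum := by
  induction C using Multiset.induction_on with
  | empty => simp
  | cons a C ih =>
    simp only [Multiset.countP_cons, sum_add_distrib, ih, Multiset.map_cons, Multiset.sum_cons,
      card_filter]
    ring

theorem Multiset.countP_exists_le_sum {α ι : Type*} [Fintype ι] (P : ι → α → Prop)
    [∀ i, DecidablePred (P i)] [DecidablePred fun a => ∃ i, P i a] (C : Multiset α) :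
    C.countP (fun a => ∃ i, P i a) ≤ ∑ i, C.countP (P i) := by
  induction C using Multiset.induction_on with
  | empty => simp
  | cons a C ih =>
    simp only [Multiset.countP_cons, sum_add_distrib]
    refine add_le_add ih ?_
    split_ifs with h
    · obtain ⟨i, hi⟩ := h
      exact (Finset.single_le_sum (f := fun i => if P i a then 1 else 0) (fun _ _ => Nat.zero_le _)
        (mem_univ i)).trans_eq' (by simp [hi])
    · exact Nat.zero_le _

abbrev Line := (Fin 2 → ℝ) × ℝ

def OnLine (H : Line) (p : Fin 2 → ℝ) : Prop := ∑ i, H.1 i * p i = H.2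

def SameLine (H L : Line) : Prop := ∀ p, OnLine H p ↔ OnLine L p

def lineEval (H : Line) (p : Fin 2 → ℝ) : ℝ := ∑ i, H.1 i * p i - H.2

def translateLine (v : Fin 2 → ℝ) (H : Line) : Line := (H.1, H.2 - ∑ i, H.1 i * v i)

def IsCover (k n : ℕ) (C : Multiset Line) : Prop :=
  ∀ x ∈ TriGrid 2 n, k ≤ hypCount 2 C (toReal x)

lemma onLine_iff (H : Line) (p : Fin 2 → ℝ) : OnLine H p ↔ H.1 0 * p 0 + H.1 1 * p 1 = H.2 := by
  rw [OnLine, Fin.sum_univ_two]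

lemma onLine_iff_lineEval_eq_zero {H : Line} {p : Fin 2 → ℝ} : OnLine H p ↔ lineEval H p = 0 :=
  sub_eq_zero.symm

lemma onLine_translate (v : Fin 2 → ℝ) (H : Line) (p : Fin 2 → ℝ) :
    OnLine (translateLine v H) p ↔ OnLine H (p + v) := by
  simp only [OnLine, translateLine, Pi.add_apply, mul_add, sum_add_distrib, eq_sub_iff_add_eq]

lemma toReal_injective {d : ℕ} : Function.Injective (toReal (d := d)) := fun x y h =>
  funext fun i => by simpa [toReal] using congrFun h i

lemma toReal_add {d : ℕ} (x y : Fin d → ℤ) : toReal (x + y) = toReal x + toReal y := by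
  funext i; simp [toReal]

lemma fin_two_ne_zero_iff {a : Fin 2 → ℝ} : a ≠ 0 ↔ a 0 ≠ 0 ∨ a 1 ≠ 0 := by
  rw [Ne, funext_iff, Fin.forall_fin_two]
  simp only [Pi.zero_apply]
  tauto

-- Both normals are orthogonal to `p - q ≠ 0`, so their cross product vanishes.
lemma onLine_of_two_points {H L : Line} (hH : H.1 ≠ 0) {p q x : Fin 2 → ℝ} (hpq : p ≠ q)
    (hpH : OnLine H p) (hqH : OnLine H q) (hpL : OnLine L p) (hqL : OnLine L q)
    (hxH : OnLine H x) : OnLine L x := by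
  rw [onLine_iff] at *
  have hd : p 0 - q 0 ≠ 0 ∨ p 1 - q 1 ≠ 0 := fin_two_ne_zero_iff.mp (sub_ne_zero.mpr hpq)
  have hcross : H.1 0 * L.1 1 - H.1 1 * L.1 0 = 0 := by
    rcases hd with hd | hd
    · refine (mul_eq_zero.mp ?_).resolve_left hd
      linear_combination L.1 1 * (hpH - hqH) - H.1 1 * (hpL - hqL)
    · refine (mul_eq_zero.mp ?_).resolve_left hd
      linear_combination H.1 0 * (hpL - hqL) - L.1 0 * (hpH - hqH)
  rcases fin_two_ne_zero_iff.mp hH with h | h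
  · refine mul_left_cancel₀ h ?_
    linear_combination L.1 0 * (hxH - hpH) + (x 1 - p 1) * hcross + H.1 0 * hpL
  · refine mul_left_cancel₀ h ?_
    linear_combination L.1 1 * (hxH - hpH) - (x 0 - p 0) * hcross + H.1 1 * hpL

lemma sameLine_of_two_points {H L : Line} (hH : H.1 ≠ 0) (hL : L.1 ≠ 0) {p q : Fin 2 → ℝ}
    (hpq : p ≠ q) (hpH : OnLine H p) (hqH : OnLine H q) (hpL : OnLine L p) (hqL : OnLine L q) :
    SameLine H L := fun _ =>
  ⟨onLine_of_two_points hH hpq hpH hqH hpL hqL, onLine_of_two_points hL hpq hpL hqL hpH hqH⟩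

lemma collinear_of_onLine {H : Line} (hH : H.1 ≠ 0) {s : Set (Fin 2 → ℝ)}
    (hs : ∀ p ∈ s, OnLine H p) : Collinear ℝ s := by
  have hN : H.1 0 ^ 2 + H.1 1 ^ 2 ≠ 0 := by
    rcases fin_two_ne_zero_iff.mp hH with h | h <;> positivity
  -- the foot of the perpendicular from the origin, and the normal turned by a right angle
  rw [collinear_iff_exists_forall_eq_smul_vadd]
  refine ⟨(H.2 / (H.1 0 ^ 2 + H.1 1 ^ 2)) • H.1, ![-H.1 1, H.1 0], fun p hp => ?_⟩
  have hp := (onLine_iff H p).mp (hs p hp)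
  refine ⟨(H.1 0 * p 1 - H.1 1 * p 0) / (H.1 0 ^ 2 + H.1 1 ^ 2), funext fun i => ?_⟩
  fin_cases i <;> simp <;> field_simp
  · linear_combination H.1 0 * hp
  · linear_combination H.1 1 * hp

lemma lineEval_lineMap (H : Line) (p q : Fin 2 → ℝ) (t : ℝ) :
    lineEval H (AffineMap.lineMap p q t) = (1 - t) * lineEval H p + t * lineEval H q := by
  simp only [lineEval, AffineMap.lineMap_apply_module, Fin.sum_univ_two, Pi.add_apply,
    Pi.smul_apply, smul_eq_mul]
  ring

lemma Wbtw.lineEval_eq_zero_or_eq_zero {H : Line} {p q r : Fin 2 → ℝ} (h : Wbtw ℝ p q r)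
    (hp : 0 ≤ lineEval H p) (hr : 0 ≤ lineEval H r) (hq : lineEval H q = 0) :
    lineEval H p = 0 ∨ lineEval H r = 0 := by
  obtain ⟨t, ⟨ht0, ht1⟩, rfl⟩ := h
  rw [lineEval_lineMap] at hq
  rcases eq_or_lt_of_le ht1 with rfl | ht1
  · right; linarith
  · left; nlinarith [mul_nonneg ht0 hr]

lemma mem_triGrid_two {n : ℕ} {x : Fin 2 → ℤ} :
    x ∈ TriGrid 2 n ↔ 0 ≤ x 0 ∧ 0 ≤ x 1 ∧ x 0 + x 1 ≤ n - 1 := by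
  simp only [TriGrid, Set.mem_ofPred_eq, Fin.forall_fin_two, Fin.sum_univ_two, and_assoc]

/-- The sides `x = 0`, `y = 0` and `x + y = n - 1` of `T_2(n)`, oriented so that `lineEval` is
nonnegative on the triangle. -/
def edge (n : ℕ) : Fin 3 → Line := ![(![1, 0], 0), (![0, 1], 0), (![-1, -1], 1 - n)]

lemma edge_normal_ne_zero (n : ℕ) (j : Fin 3) : (edge n j).1 ≠ 0 := by
  fin_cases j <;> simp [edge]

lemma lineEval_edge (n : ℕ) (j : Fin 3) (x : Fin 2 → ℤ) :
    lineEval (edge n j) (toReal x) = ((![x 0, x 1, n - 1 - x 0 - x 1] j : ℤ) : ℝ) := by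
  fin_cases j <;> simp [lineEval, edge, toReal, Fin.sum_univ_two]
  ring

lemma onLine_edge_iff (n : ℕ) (j : Fin 3) (x : Fin 2 → ℤ) :
    OnLine (edge n j) (toReal x) ↔ ![x 0, x 1, n - 1 - x 0 - x 1] j = 0 := by
  rw [onLine_iff_lineEval_eq_zero, lineEval_edge, Int.cast_eq_zero]

lemma lineEval_edge_nonneg {n : ℕ} (j : Fin 3) {x : Fin 2 → ℤ} (hx : x ∈ TriGrid 2 n) :
    0 ≤ lineEval (edge n j) (toReal x) := by
  rw [mem_triGrid_two] at hx
  rw [lineEval_edge, Int.cast_nonneg_iff]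
  fin_cases j <;> simp <;> omega

/-- The `3n - 3` lattice points on the sides of `T_2(n)`, each listed once. -/
def boundary (n : ℕ) : Finset (Fin 2 → ℤ) :=
  ((range n).image fun t : ℕ => ![0, (t : ℤ)]) ∪ ((Ico 1 n).image fun t : ℕ => ![(t : ℤ), 0]) ∪
    ((Ico 1 (n - 1)).image fun t : ℕ => ![(t : ℤ), n - 1 - t])

lemma mem_boundary {n : ℕ} {x : Fin 2 → ℤ} (hx : x ∈ boundary n) :
    x ∈ TriGrid 2 n ∧ ∃ j, OnLine (edge n j) (toReal x) := by
  simp only [mem_triGrid_two, onLine_edge_iff, Fin.exists_fin_succ]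
  simp only [boundary, mem_union, mem_image, mem_range, mem_Ico] at hx
  rcases hx with (⟨t, ht, rfl⟩ | ⟨t, ht, rfl⟩) | ⟨t, ht, rfl⟩ <;> simp <;> omega

lemma card_boundary (n : ℕ) : (boundary n).card = n + (n - 1) + (n - 2) := by
  rw [boundary, card_union_of_disjoint, card_union_of_disjoint, card_image_of_injective,
    card_image_of_injective, card_image_of_injective]
  · simp only [card_range, Nat.card_Ico]
    omega
  · intro s t h; simpa using congrFun h 0
  · intro s t h; simpa using congrFun h 0
  · intro s t h; simpa using congrFun h 1
  · simp only [disjoint_left, mem_image, mem_range, mem_Ico]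
    rintro _ ⟨s, hs, rfl⟩ ⟨t, ht, h⟩
    have := congrFun h 0
    simp at this
    omega
  · simp only [disjoint_left, mem_union, mem_image, mem_range, mem_Ico]
    rintro _ (⟨s, hs, rfl⟩ | ⟨s, hs, rfl⟩) ⟨t, ht, h⟩
    · have := congrFun h 0
      simp at this
      omega
    · have := congrFun h 1
      simp at this
      omega

lemma eq_of_onLine_of_apply_eq {H : Line} {p q : Fin 2 → ℝ} (hp : OnLine H p)
    (hq : OnLine H q) {i j : Fin 2} (hij : i ≠ j) (hi : H.1 i ≠ 0) (hpq : p j = q j) : p = q := by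
  rw [onLine_iff] at hp hq
  have hpqi : p i = q i := by
    fin_cases i <;> fin_cases j <;> simp at hij hi hpq ⊢
    · exact mul_left_cancel₀ hi (by linear_combination hp - hq - H.1 1 * hpq)
    · exact mul_left_cancel₀ hi (by linear_combination hp - hq - H.1 0 * hpq)
  exact funext fun k => by
    fin_cases i <;> fin_cases j <;> fin_cases k <;> simp_all

lemma card_filter_onLine_le {n : ℕ} {H : Line} (hH : H.1 ≠ 0) {B : Finset (Fin 2 → ℤ)}
    (hB : ∀ x ∈ B, x ∈ TriGrid 2 n) : (B.filter fun x => OnLine H (toReal x)).card ≤ n := by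
  obtain ⟨i, j, hij, hi⟩ : ∃ i j : Fin 2, i ≠ j ∧ H.1 i ≠ 0 := by
    rcases fin_two_ne_zero_iff.mp hH with h | h
    exacts [⟨0, 1, by decide, h⟩, ⟨1, 0, by decide, h⟩]
  have hj : ∀ x ∈ B, 0 ≤ x j ∧ x j ≤ n - 1 := fun x hx => by
    have := mem_triGrid_two.mp (hB x hx)
    fin_cases j <;> simp <;> omega
  refine (card_le_card_of_injOn (fun x => (x j).toNat) (t := range n) (fun x hx => ?_) ?_).trans
    (card_range n).le
  · have := hj x (mem_filter.mp hx).1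
    simp only [coe_range, Set.mem_Iio]
    omega
  · intro x hx y hy hxy
    simp only [coe_filter, Set.mem_ofPred_eq] at hx hy
    dsimp only at hxy
    have hxj := hj x hx.1
    have hyj := hj y hy.1
    refine toReal_injective (eq_of_onLine_of_apply_eq hx.2 hy.2 hij hi ?_)
    simp only [toReal, Int.cast_inj]
    omega

lemma card_filter_onLine_boundary_le_two {n : ℕ} {H : Line} (hH : H.1 ≠ 0)
    (hedge : ∀ j, ¬ SameLine H (edge n j)) :
    ((boundary n).filter fun x => OnLine H (toReal x)).card ≤ 2 := by
  set S := (boundary n).filter fun x => OnLine H (toReal x)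
  have hS : ∀ x ∈ S, x ∈ TriGrid 2 n ∧ (∃ j, OnLine (edge n j) (toReal x)) ∧ OnLine H (toReal x) :=
    fun x hx => ⟨(mem_boundary (mem_filter.mp hx).1).1, (mem_boundary (mem_filter.mp hx).1).2,
      (mem_filter.mp hx).2⟩
  have key : ∀ x ∈ S, ∀ y ∈ S, ∀ z ∈ S, x ≠ y → y ≠ z →
      ¬ Wbtw ℝ (toReal x) (toReal y) (toReal z) := by
    intro x hx y hy z hz hxy hyz hbtw
    obtain ⟨hxT, -, hxH⟩ := hS x hx
    obtain ⟨-, ⟨j, hyj⟩, hyH⟩ := hS y hy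
    obtain ⟨hzT, -, hzH⟩ := hS z hz
    rcases hbtw.lineEval_eq_zero_or_eq_zero (lineEval_edge_nonneg j hxT)
      (lineEval_edge_nonneg j hzT) (onLine_iff_lineEval_eq_zero.mp hyj) with h | h
    · exact hedge j (sameLine_of_two_points hH (edge_normal_ne_zero n j)
        (toReal_injective.ne hxy) hxH hyH (onLine_iff_lineEval_eq_zero.mpr h) hyj)
    · exact hedge j (sameLine_of_two_points hH (edge_normal_ne_zero n j)
        (toReal_injective.ne hyz) hyH hzH hyj (onLine_iff_lineEval_eq_zero.mpr h))
  by_contra! h3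
  obtain ⟨x, hx, y, hy, z, hz, hxy, hxz, hyz⟩ := two_lt_card.mp h3
  have hcol : Collinear ℝ {toReal x, toReal y, toReal z} := by
    refine collinear_of_onLine hH ?_
    simp only [Set.mem_insert_iff, Set.mem_singleton_iff, forall_eq_or_imp, forall_eq]
    exact ⟨(hS x hx).2.2, (hS y hy).2.2, (hS z hz).2.2⟩
  rcases hcol.wbtw_or_wbtw_or_wbtw with h | h | h
  · exact key x hx y hy z hz hxy hyz h
  · exact key y hy z hz x hx hyz hxz.symm h
  · exact key z hz x hx y hy hxz.symm hxy h

lemma IsCover.three_mul_le_card_of_countP_edge_le_two {n : ℕ} (hn : 2 ≤ n) {C : Multiset Line}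
    (hC : ∀ H ∈ C, H.1 ≠ 0) (hcov : IsCover 4 n C)
    (hedge : ∀ j, C.countP (SameLine · (edge n j)) ≤ 2) : 3 * n ≤ Multiset.card C := by
  set f : Line → ℕ := fun H => ((boundary n).filter fun x => OnLine H (toReal x)).card
  set IsEdge : Line → Prop := fun H => ∃ j, SameLine H (edge n j)
  set E := C.filter IsEdge
  set N := C.filter (¬ IsEdge ·)
  have hincidences : 4 * (boundary n).card ≤ (C.map f).sum := by
    rw [← Multiset.sum_countP_eq_sum_map_card_filter, mul_comm, ← smul_eq_mul, ← sum_const]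
    exact sum_le_sum fun x hx => hcov x (mem_boundary hx).1
  have hsplit : (C.map f).sum = (E.map f).sum + (N.map f).sum := by
    rw [← Multiset.sum_add, ← Multiset.map_add, Multiset.filter_add_not]
  have hE : (E.map f).sum ≤ Multiset.card E * n := by
    simpa using Multiset.sum_le_card_nsmul (E.map f) n fun _ hm => by
      obtain ⟨H, hH, rfl⟩ := Multiset.mem_map.mp hm
      exact card_filter_onLine_le (hC H (Multiset.mem_of_mem_filter hH))
        fun x hx => (mem_boundary hx).1
  have hN : (N.map f).sum ≤ Multiset.card N * 2 := by
    simpa using Multiset.sum_le_card_nsmul (N.map f) 2 fun _ hm => by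
      obtain ⟨H, hH, rfl⟩ := Multiset.mem_map.mp hm
      rw [Multiset.mem_filter, not_exists] at hH
      exact card_filter_onLine_boundary_le_two (hC H hH.1) hH.2
  have hEcard : Multiset.card E ≤ 6 := by
    rw [← Multiset.countP_eq_card_filter]
    calc _ ≤ ∑ j, C.countP (SameLine · (edge n j)) := Multiset.countP_exists_le_sum _ C
      _ ≤ ∑ _j : Fin 3, 2 := sum_le_sum fun j _ => hedge j
      _ = 6 := by simp
  have hcard : Multiset.card C = Multiset.card E + Multiset.card N := by
    rw [← Multiset.card_add, Multiset.filter_add_not]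
  have hB := card_boundary n
  obtain ⟨m, rfl⟩ : ∃ m, n = m + 2 := ⟨n - 2, by omega⟩
  simp only [Nat.add_sub_cancel, Nat.add_succ_sub_one] at hB
  nlinarith [Nat.mul_le_mul_left m hEcard]

lemma IsCover.filter_map_translateLine {k n : ℕ} {C : Multiset Line} (hcov : IsCover k (n + 1) C)
    (P : Line → Prop) (v : Fin 2 → ℤ)
    (hv : ∀ x ∈ TriGrid 2 n, x + v ∈ TriGrid 2 (n + 1) ∧ ∀ H, P H → ¬ OnLine H (toReal (x + v))) :
    IsCover k n ((C.filter (¬ P ·)).map (translateLine (toReal v))) := by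
  intro x hx
  obtain ⟨hxv, hoff⟩ := hv x hx
  calc k ≤ C.countP (OnLine · (toReal (x + v))) := hcov _ hxv
    _ = ((C.filter (¬ P ·)).map (translateLine (toReal v))).countP (OnLine · (toReal x)) := by
      rw [Multiset.countP_map, ← Multiset.countP_eq_card_filter, Multiset.countP_filter]
      refine Multiset.countP_congr rfl fun H _ => ?_
      rw [onLine_translate, ← toReal_add]
      exact propext ⟨fun h => ⟨h, fun hP => hoff H hP h⟩, And.left⟩

/-- `T_2(n + 1)` without its side `j` is `T_2(n) + edgeShift j`. -/
def edgeShift : Fin 3 → Fin 2 → ℤ := ![![1, 0], ![0, 1], 0]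

lemma edgeShift_spec {n : ℕ} (j : Fin 3) {x : Fin 2 → ℤ} (hx : x ∈ TriGrid 2 n) :
    x + edgeShift j ∈ TriGrid 2 (n + 1) ∧ ¬ OnLine (edge (n + 1) j) (toReal (x + edgeShift j)) := by
  rw [mem_triGrid_two] at hx ⊢
  rw [onLine_edge_iff]
  fin_cases j <;> simp [edgeShift] <;> omega

lemma IsCover.exists_of_three_le_countP_edge {k n : ℕ} {C : Multiset Line}
    (hC : ∀ H ∈ C, H.1 ≠ 0) (hcov : IsCover k (n + 1) C) {j : Fin 3}
    (hj : 3 ≤ C.countP (SameLine · (edge (n + 1) j))) :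
    ∃ D : Multiset Line, (∀ H ∈ D, H.1 ≠ 0) ∧ IsCover k n D ∧
      Multiset.card D + 3 ≤ Multiset.card C := by
  refine ⟨(C.filter (¬ SameLine · (edge (n + 1) j))).map (translateLine (toReal (edgeShift j))),
    ?_, hcov.filter_map_translateLine _ _ fun x hx => ⟨(edgeShift_spec j hx).1,
      fun H hH hHx => (edgeShift_spec j hx).2 ((hH _).mp hHx)⟩, ?_⟩
  · intro H' hH'
    obtain ⟨H, hH, rfl⟩ := Multiset.mem_map.mp hH'
    exact hC H (Multiset.mem_of_mem_filter hH)
  · rw [Multiset.card_map, ← Multiset.countP_eq_card_filter,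
      Multiset.card_eq_countP_add_countP (SameLine · (edge (n + 1) j)) C]
    omega

theorem three_mul_le_card_of_isCover :
    ∀ (n : ℕ) {C : Multiset Line}, (∀ H ∈ C, H.1 ≠ 0) → IsCover 4 n C → 3 * n ≤ Multiset.card C
  | 0, _, _, _ => by simp
  | 1, C, _, hcov => by
    have := (hcov 0 (by simp [mem_triGrid_two])).trans (Multiset.countP_le_card _ C)
    omega
  | n + 2, C, hC, hcov => by
    by_cases hpeel : ∃ j, 3 ≤ C.countP (SameLine · (edge (n + 2) j))
    · obtain ⟨j, hj⟩ := hpeel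
      obtain ⟨D, hD, hDcov, hcard⟩ := hcov.exists_of_three_le_countP_edge hC hj
      have := three_mul_le_card_of_isCover (n + 1) hD hDcov
      omega
    · simp only [not_exists, not_le] at hpeel
      exact hcov.three_mul_le_card_of_countP_edge_le_two (by omega) hC
        fun j => Nat.le_of_lt_succ (hpeel j)

theorem stmt5_general (n : ℕ)
    (C : Multiset ((Fin 2 → ℝ) × ℝ))
    (hC : ∀ H ∈ C, H.1 ≠ 0)
    (hcov : ∀ x ∈ TriGrid 2 n, 4 ≤ hypCount 2 C (toReal x)) :
    3 * n ≤ Multiset.card C :=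
  three_mul_le_card_of_isCover n hC hcov

theorem stmt5 (n : ℕ) (hn : 2 ≤ n)
    (C : Multiset ((Fin 2 → ℝ) × ℝ))
    (hC : ∀ H ∈ C, H.1 ≠ 0)
    (hcov : ∀ x ∈ TriGrid 2 n, 4 ≤ hypCount 2 C (toReal x)) :
    3 * n ≤ Multiset.card C :=
  stmt5_general n C hC hcov
end

section
/- For every d ≥ 3 and n ≥ 1, the multiset of (d+1)·⌈n/(d−1)⌉ hyperplanes consisting of x_i = j for 1 ≤ i ≤ d and 0 ≤ j ≤ ⌈n/(d−1)⌉−1, together with x_1+⋯+x_d = n−1−j for 0 ≤ j ≤ ⌈n/(d−1)⌉−1, covers every point of T_d(n) at least three times. In particular, f(n,d,3) ≤ (1 + 2/(d−1))n + O_d(1). -/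
open scoped Classical

/-- `⌈n/(d-1)⌉`. -/
def m14 (n d : ℕ) : ℕ := (n + d - 2) / (d - 1)

/-- The explicit 3-cover: hyperplanes `x_i = j` for `1 ≤ i ≤ d`, `0 ≤ j ≤ ⌈n/(d-1)⌉ - 1`,
together with `x_1 + ⋯ + x_d = n - 1 - j` for `0 ≤ j ≤ ⌈n/(d-1)⌉ - 1`. -/
noncomputable def cover14 (n d : ℕ) : Multiset ((Fin d → ℝ) × ℝ) :=
  ((Finset.univ : Finset (Fin d)) ×ˢ Finset.range (m14 n d)).val.map
    (fun ij => (Pi.single ij.1 (1 : ℝ), (ij.2 : ℝ))) +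
  (Finset.range (m14 n d)).val.map
    (fun j => ((fun _ => (1 : ℝ)), (n : ℝ) - 1 - (j : ℝ)))

/-!
A point `x` of `T_d(n)` lies on the cover's hyperplane `x_i = j` with `j = x i` for every
coordinate with `x i < m := ⌈n/(d-1)⌉`.
At most `d - 2` coordinates are `≥ m`, since otherwise `∑ x ≥ (d-1)m ≥ n`; so at least two
coordinate hyperplanes of the cover pass through `x`. If only two do, the remaining `d - 2`
coordinates give `∑ x ≥ (d-2)m ≥ n - m`, so `x` lies in one of the top layers
`∑ x = n - 1 - j`, `j < m`, which supplies the third hyperplane.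
-/

open Finset

theorem n_le_m14_mul_pred {n d : ℕ} (hd : 2 ≤ d) : n ≤ m14 n d * (d - 1) := by
  have := Nat.lt_div_mul_add (a := n + d - 2) (b := d - 1) (by omega)
  unfold m14
  omega

theorem card_filter_not_lt_mul_le_sum {ι : Type*} [Fintype ι] (x : ι → ℤ) (hx : ∀ i, 0 ≤ x i)
    (m : ℤ) : #{i | ¬ x i < m} * m ≤ ∑ i, x i :=
  calc #{i | ¬ x i < m} * m ≤ ∑ i ∈ {i | ¬ x i < m}, x i := by
        simpa using card_nsmul_le_sum _ x m fun i hi => not_lt.mp (mem_filter.mp hi).2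
    _ ≤ ∑ i, x i := sum_le_sum_of_subset_of_nonneg (subset_univ _) fun i _ _ => hx i

noncomputable def coordHyperplanes (d m : ℕ) : Multiset ((Fin d → ℝ) × ℝ) :=
  ((univ : Finset (Fin d)) ×ˢ range m).val.map fun ij => (Pi.single ij.1 (1 : ℝ), (ij.2 : ℝ))

noncomputable def sumHyperplanes (d n m : ℕ) : Multiset ((Fin d → ℝ) × ℝ) :=
  (range m).val.map fun j => ((fun _ => (1 : ℝ)), (n : ℝ) - 1 - (j : ℝ))

theorem cover14_eq (n d : ℕ) :
    cover14 n d = coordHyperplanes d (m14 n d) + sumHyperplanes d n (m14 n d) := rfl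

theorem hypCount_add {d : ℕ} (C₁ C₂ : Multiset ((Fin d → ℝ) × ℝ)) (p : Fin d → ℝ) :
    hypCount d (C₁ + C₂) p = hypCount d C₁ p + hypCount d C₂ p :=
  Multiset.countP_add _ _ _

theorem card_coordHyperplanes (d m : ℕ) : Multiset.card (coordHyperplanes d m) = d * m := by
  simp [coordHyperplanes]

theorem card_sumHyperplanes (d n m : ℕ) : Multiset.card (sumHyperplanes d n m) = m := by
  simp [sumHyperplanes]

theorem card_filter_lt_le_hypCount_coordHyperplanes {d : ℕ} (x : Fin d → ℤ) (hx : ∀ i, 0 ≤ x i)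
    (m : ℕ) : #{i | x i < m} ≤ hypCount d (coordHyperplanes d m) (toReal x) := by
  rw [hypCount, coordHyperplanes, Multiset.countP_map, ← Finset.filter_val]
  refine card_le_card_of_injOn (fun i => (i, (x i).toNat)) (fun i hi => ?_)
    fun i _ j _ hij => (Prod.mk.inj hij).1
  have hi : x i < m := by simpa using hi
  have hxi : ((x i).toNat : ℤ) = x i := Int.toNat_of_nonneg (hx i)
  simp only [coe_filter, mem_product, mem_univ, mem_range, true_and, Set.mem_ofPred_eq]
  refine ⟨by omega, ?_⟩
  simp only [Pi.single_apply, ite_mul, one_mul, zero_mul, sum_ite_eq', mem_univ, if_true, toReal]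
  exact_mod_cast hxi.symm

theorem one_le_hypCount_sumHyperplanes {d : ℕ} (n m : ℕ) (x : Fin d → ℤ)
    (hlo : (n : ℤ) - m ≤ ∑ i, x i) (hhi : ∑ i, x i ≤ n - 1) :
    1 ≤ hypCount d (sumHyperplanes d n m) (toReal x) := by
  obtain ⟨j, hj⟩ : ∃ j : ℕ, (j : ℤ) = n - 1 - ∑ i, x i := ⟨_, Int.toNat_of_nonneg (by omega)⟩
  refine Multiset.countP_pos.mpr
    ⟨((fun _ => 1), (n : ℝ) - 1 - j), Multiset.mem_map.mpr ⟨j, ?_, rfl⟩, ?_⟩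
  · simp
    omega
  · have hjR : (j : ℝ) = n - 1 - ∑ i, (x i : ℝ) := by exact_mod_cast hj
    simp only [one_mul, toReal, hjR]
    ring

theorem stmt14_general (d n : ℕ) (hd : 3 ≤ d) :
    Multiset.card (cover14 n d) = (d + 1) * m14 n d ∧
    (∀ x ∈ TriGrid d n, 3 ≤ hypCount d (cover14 n d) (toReal x)) := by
  refine ⟨by simp [cover14_eq, card_coordHyperplanes, card_sumHyperplanes]; ring, ?_⟩
  rintro x ⟨hx0, hxs⟩
  rw [cover14_eq, hypCount_add]
  set m := m14 n d
  have hnm : (n : ℤ) ≤ m * (d - 1 : ℕ) := by exact_mod_cast n_le_m14_mul_pred (by omega)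
  have hsplit : #{i | x i < m} + #{i | ¬ x i < m} = d := by
    simpa using card_filter_add_card_filter_not (s := univ) fun i => x i < m
  have hfar := card_filter_not_lt_mul_le_sum x hx0 m
  have hcoord := card_filter_lt_le_hypCount_coordHyperplanes x hx0 m
  have hfew_far : #{i | ¬ x i < m} < d - 1 := by
    have : (#{i | ¬ x i < m} : ℤ) * m < (d - 1 : ℕ) * m := by linarith
    exact_mod_cast lt_of_mul_lt_mul_right this (by positivity)
  obtain hk | hk : 3 ≤ #{i | x i < m} ∨ #{i | ¬ x i < m} = d - 2 := by omega
  · omega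
  · have hlo : (n : ℤ) - m ≤ ∑ i, x i := by
      have : ((d - 1 : ℕ) : ℤ) = (d - 2 : ℕ) + 1 := by omega
      rw [hk] at hfar
      nlinarith
    have := one_le_hypCount_sumHyperplanes n m x hlo hxs
    omega

theorem stmt14 (d n : ℕ) (hd : 3 ≤ d) (hn : 1 ≤ n) :
    Multiset.card (cover14 n d) = (d + 1) * m14 n d ∧
    (∀ x ∈ TriGrid d n, 3 ≤ hypCount d (cover14 n d) (toReal x)) :=
  stmt14_general d n hd
end

section
/- The minimum total weight of a fractional plane cover of T_3(3) is at most 11/6. Specifically, assigning weight 1/3 to each of the planes x_1 = 0, x_2 = 0, x_3 = 0, x_1+x_2+x_3 = 2, and weight 1/6 to each of x_1+x_2 = 1, x_1+x_3 = 1, x_2+x_3 = 1 gives a fractional cover of total weight 11/6. -/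
open scoped Classical

/-- The total weight of a finitely-supported weight assignment on hyperplanes. -/
noncomputable def fracTotal {d : ℕ} (w : ((Fin d → ℝ) × ℝ) →₀ ℝ) : ℝ :=
  ∑ H ∈ w.support, w H

/-- The total weight of hyperplanes passing through the point `p`. -/
noncomputable def fracAt {d : ℕ} (w : ((Fin d → ℝ) × ℝ) →₀ ℝ) (p : Fin d → ℝ) : ℝ :=
  ∑ H ∈ w.support.filter (fun H => ∑ i, H.1 i * p i = H.2), w H

/-- `w` is a fractional cover of `T_d(n)`: nonnegative weights on genuine hyperplanes such that
every grid point lies on hyperplanes of total weight at least `1`. -/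
def IsFracCover (d n : ℕ) (w : ((Fin d → ℝ) × ℝ) →₀ ℝ) : Prop :=
  (∀ H, 0 ≤ w H) ∧ (∀ H ∈ w.support, H.1 ≠ 0) ∧
  ∀ x ∈ TriGrid d n, 1 ≤ fracAt w (toReal x)

/-!
Up to symmetry `T_3(3)` has four kinds of points, each covered with weight exactly `1`: the origin
lies on the three coordinate planes; `eᵢ` on two coordinate planes and two planes `xⱼ + xₖ = 1`;
`2eᵢ` on two coordinate planes and `x₁ + x₂ + x₃ = 2`; `eᵢ + eⱼ` on one coordinate plane,
`x₁ + x₂ + x₃ = 2` and two planes `xⱼ + xₖ = 1`. Both the weight at a point and the total weight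
are additive in the weight assignment, so they are computed one plane at a time.
-/

section FracCover

variable {d : ℕ}

theorem fracAt_eq_sum (w : ((Fin d → ℝ) × ℝ) →₀ ℝ) (p : Fin d → ℝ) :
    fracAt w p = w.sum fun H c => if ∑ i, H.1 i * p i = H.2 then c else 0 := by
  rw [fracAt, Finsupp.sum, Finset.sum_filter]

theorem fracAt_add (w₁ w₂ : ((Fin d → ℝ) × ℝ) →₀ ℝ) (p : Fin d → ℝ) :
    fracAt (w₁ + w₂) p = fracAt w₁ p + fracAt w₂ p := by
  simp only [fracAt_eq_sum]
  exact Finsupp.sum_add_index' (fun _ => by simp) fun _ _ _ => by split_ifs <;> simp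

theorem fracAt_single (H : (Fin d → ℝ) × ℝ) (c : ℝ) (p : Fin d → ℝ) :
    fracAt (Finsupp.single H c) p = if ∑ i, H.1 i * p i = H.2 then c else 0 := by
  rw [fracAt_eq_sum, Finsupp.sum_single_index (by simp)]

theorem fracTotal_eq_sum (w : ((Fin d → ℝ) × ℝ) →₀ ℝ) : fracTotal w = w.sum fun _ c => c :=
  rfl

theorem fracTotal_add (w₁ w₂ : ((Fin d → ℝ) × ℝ) →₀ ℝ) :
    fracTotal (w₁ + w₂) = fracTotal w₁ + fracTotal w₂ := by
  simp only [fracTotal_eq_sum]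
  exact Finsupp.sum_add_index' (fun _ => rfl) fun _ _ _ => rfl

theorem fracTotal_single (H : (Fin d → ℝ) × ℝ) (c : ℝ) : fracTotal (Finsupp.single H c) = c := by
  rw [fracTotal_eq_sum, Finsupp.sum_single_index rfl]

theorem normal_ne_zero_of_mem_support_add {w₁ w₂ : ((Fin d → ℝ) × ℝ) →₀ ℝ}
    (h₁ : ∀ H ∈ w₁.support, H.1 ≠ 0) (h₂ : ∀ H ∈ w₂.support, H.1 ≠ 0) :
    ∀ H ∈ (w₁ + w₂).support, H.1 ≠ 0 := fun H hH =>
  (Finset.mem_union.1 (Finsupp.support_add hH)).elim (h₁ H) (h₂ H)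

theorem normal_ne_zero_of_mem_support_single {H₀ : (Fin d → ℝ) × ℝ} (h : H₀.1 ≠ 0) (c : ℝ) :
    ∀ H ∈ (Finsupp.single H₀ c).support, H.1 ≠ 0 := fun _ hH =>
  Finset.mem_singleton.1 (Finsupp.support_single_subset hH) ▸ h

end FracCover

noncomputable def fracCoverT33 : ((Fin 3 → ℝ) × ℝ) →₀ ℝ :=
  Finsupp.single (![1, 0, 0], 0) (1 / 3) + Finsupp.single (![0, 1, 0], 0) (1 / 3) +
  Finsupp.single (![0, 0, 1], 0) (1 / 3) + Finsupp.single (![1, 1, 1], 2) (1 / 3) +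
  Finsupp.single (![1, 1, 0], 1) (1 / 6) + Finsupp.single (![1, 0, 1], 1) (1 / 6) +
  Finsupp.single (![0, 1, 1], 1) (1 / 6)

theorem fracAt_fracCoverT33 (x : Fin 3 → ℤ) :
    fracAt fracCoverT33 (toReal x) =
      (if x 0 = 0 then (1 / 3 : ℝ) else 0) + (if x 1 = 0 then (1 / 3 : ℝ) else 0) +
          (if x 2 = 0 then (1 / 3 : ℝ) else 0) +
          (if x 0 + x 1 + x 2 = 2 then (1 / 3 : ℝ) else 0) +
          (if x 0 + x 1 = 1 then (1 / 6 : ℝ) else 0) +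
          (if x 0 + x 2 = 1 then (1 / 6 : ℝ) else 0) +
          (if x 1 + x 2 = 1 then (1 / 6 : ℝ) else 0) := by
  simp [fracCoverT33, fracAt_add, fracAt_single, Fin.sum_univ_three, toReal]
  norm_cast

theorem fracTotal_fracCoverT33 : fracTotal fracCoverT33 = 11 / 6 := by
  simp only [fracCoverT33, fracTotal_add, fracTotal_single]
  norm_num

theorem fracCoverT33_nonneg (H : (Fin 3 → ℝ) × ℝ) : 0 ≤ fracCoverT33 H := by
  simp only [fracCoverT33, Finsupp.add_apply, Finsupp.single_apply]
  split_ifs <;> norm_num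

theorem normal_ne_zero_of_mem_support_fracCoverT33 :
    ∀ H ∈ fracCoverT33.support, H.1 ≠ 0 := by
  unfold fracCoverT33
  repeat' apply normal_ne_zero_of_mem_support_add
  all_goals
    apply normal_ne_zero_of_mem_support_single
    simp

theorem triGrid_three_three_cover (x : Fin 3 → ℤ) (hx : x ∈ TriGrid 3 3) :
    1 ≤ (if x 0 = 0 then (1 / 3 : ℝ) else 0) + (if x 1 = 0 then (1 / 3 : ℝ) else 0) +
          (if x 2 = 0 then (1 / 3 : ℝ) else 0) +
          (if x 0 + x 1 + x 2 = 2 then (1 / 3 : ℝ) else 0) +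
          (if x 0 + x 1 = 1 then (1 / 6 : ℝ) else 0) +
          (if x 0 + x 2 = 1 then (1 / 6 : ℝ) else 0) +
          (if x 1 + x 2 = 1 then (1 / 6 : ℝ) else 0) := by
  obtain ⟨hpos, hsum⟩ := hx
  rw [Fin.sum_univ_three] at hsum
  have h₀ := hpos 0
  have h₁ := hpos 1
  have h₂ := hpos 2
  have h₀₂ : x 0 ≤ 2 := by omega
  have h₁₂ : x 1 ≤ 2 := by omega
  have h₂₂ : x 2 ≤ 2 := by omega
  interval_cases x 0 <;> interval_cases x 1 <;> interval_cases x 2 <;> norm_num at hsum <;> norm_num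

/-- The explicit fractional cover of `T_3(3)`: weight `1/3` on the planes `x₁ = 0`,
`x₂ = 0`, `x₃ = 0`, `x₁+x₂+x₃ = 2`, and weight `1/6` on `x₁+x₂ = 1`, `x₁+x₃ = 1`,
`x₂+x₃ = 1`; every point of `T_3(3)` lies on planes of total weight at least `1`,
the total weight is `11/6`, and hence `f*(3,3) ≤ 11/6`. -/
theorem stmt17 :
    (∀ x ∈ TriGrid 3 3,
      1 ≤ (if x 0 = 0 then (1 / 3 : ℝ) else 0) + (if x 1 = 0 then (1 / 3 : ℝ) else 0) +
          (if x 2 = 0 then (1 / 3 : ℝ) else 0) +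
          (if x 0 + x 1 + x 2 = 2 then (1 / 3 : ℝ) else 0) +
          (if x 0 + x 1 = 1 then (1 / 6 : ℝ) else 0) +
          (if x 0 + x 2 = 1 then (1 / 6 : ℝ) else 0) +
          (if x 1 + x 2 = 1 then (1 / 6 : ℝ) else 0)) ∧
    4 * (1 / 3 : ℝ) + 3 * (1 / 6) = 11 / 6 ∧
    (∃ w : ((Fin 3 → ℝ) × ℝ) →₀ ℝ,
      IsFracCover 3 3 w ∧ fracTotal w ≤ 11 / 6) := by
  refine ⟨triGrid_three_three_cover, by norm_num, fracCoverT33, ⟨fracCoverT33_nonneg,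
    normal_ne_zero_of_mem_support_fracCoverT33, fun x hx => ?_⟩,
    fracTotal_fracCoverT33.le⟩
  exact (fracAt_fracCoverT33 x).symm ▸ triGrid_three_three_cover x hx
end
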